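/- Let n ≥ 1 and let Q ⊆ ℝⁿ be an open set of finite Lebesgue measure. For δ > 0, let F(δ) be the family of grid cells C(δ,k) = ∏ᵢ [δ·kᵢ, δ·(kᵢ+1)] (k ∈ ℤⁿ) that are entirely contained in Q, and let Q_in(δ) = ⋃ F(δ). Then for every α ∈ [0,1) there exist δ > 0 and N ∈ ℕ such that: (a) F(δ) is finite with |F(δ)| ≤ N; and (b) for every sequence A : ℕ → Set ℝⁿ of measurable subsets of Q satisfying, for each m ∈ ℕ, that if Q_in(δ) ⊄ ⋃_{i<m} A(i) then some cell c ∈ F(δ) has c ⊆ A(m) and c ⊄ ⋃_{i<m} A(i), it holds that vol(⋃_{i<N} A(i)) ≥ α · vol(Q). In particular, after at most N iterations the sets A(0), …, A(N−1) form an α-approximate cover of Q. -/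

import Mathlib

open MeasureTheory
open scoped ENNReal

/-- The closed axis-aligned grid cell at resolution `δ` indexed by `k ∈ ℤⁿ`:
`C(δ,k) = ∏ᵢ [δ·kᵢ, δ·(kᵢ+1)]`. -/
def gridCell (n : ℕ) (δ : ℝ) (k : Fin n → ℤ) : Set (Fin n → ℝ) :=
  Set.univ.pi fun i => Set.Icc (δ * (k i : ℝ)) (δ * ((k i : ℝ) + 1))

/-- The family `F(δ)` of grid cells of resolution `δ` entirely contained in `Q`. -/
def gridFamily (n : ℕ) (δ : ℝ) (Q : Set (Fin n → ℝ)) : Set (Set (Fin n → ℝ)) :=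
  {c : Set (Fin n → ℝ) | ∃ k : Fin n → ℤ, c = gridCell n δ k ∧ c ⊆ Q}

/-!
Two independent facts combine. Measure: the cells of resolution `δ` inside `Q` have pairwise
disjoint interiors of volume `δⁿ`, so there are finitely many, say `N`; and since `Q` is open,
the regions `Q_in(2⁻ᵐ)` they cover increase to `Q`, so by continuity from below one of them has
volume at least `α · vol Q`. Combinatorics: each step of the procedure covers one more of the
`N` cells until all of `Q_in(δ)` is covered, so after `N` steps `Q_in(δ)` is covered.
-/

section Combinatorics

variable {α : Type*} {F : Set (Set α)} {A : ℕ → Set α}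

lemma monotone_biUnion_lt (A : ℕ → Set α) : Monotone fun m => ⋃ i < m, A i :=
  fun _ _ hab => Set.biUnion_subset_biUnion_left (Set.Iio_subset_Iio hab)

lemma min_le_ncard_sep_subset_biUnion_lt (hF : F.Finite)
    (hstep : ∀ m, ¬ ⋃₀ F ⊆ ⋃ i < m, A i → ∃ c ∈ F, c ⊆ A m ∧ ¬ c ⊆ ⋃ i < m, A i) (m : ℕ) :
    min m F.ncard ≤ {c ∈ F | c ⊆ ⋃ i < m, A i}.ncard := by
  induction m with
  | zero => simp
  | succ m ih =>
    have hmono : {c ∈ F | c ⊆ ⋃ i < m, A i} ⊆ {c ∈ F | c ⊆ ⋃ i < m + 1, A i} :=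
      fun c hc => ⟨hc.1, hc.2.trans (monotone_biUnion_lt A m.le_succ)⟩
    have hfin : {c ∈ F | c ⊆ ⋃ i < m + 1, A i}.Finite := hF.subset (Set.sep_subset _ _)
    by_cases hcov : ⋃₀ F ⊆ ⋃ i < m, A i
    · have hall : {c ∈ F | c ⊆ ⋃ i < m, A i} = F :=
        Set.sep_eq_self_iff_mem_true.mpr fun c hc => (Set.subset_sUnion_of_mem hc).trans hcov
      calc min (m + 1) F.ncard ≤ F.ncard := min_le_right _ _
        _ = {c ∈ F | c ⊆ ⋃ i < m, A i}.ncard := by rw [hall]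
        _ ≤ _ := Set.ncard_le_ncard hmono hfin
    · obtain ⟨c, hcF, hcA, hcnew⟩ := hstep m hcov
      have hins : insert c {c ∈ F | c ⊆ ⋃ i < m, A i} ⊆ {c ∈ F | c ⊆ ⋃ i < m + 1, A i} :=
        Set.insert_subset ⟨hcF, hcA.trans (Set.subset_biUnion_of_mem m.lt_succ_self)⟩ hmono
      calc min (m + 1) F.ncard ≤ {c ∈ F | c ⊆ ⋃ i < m, A i}.ncard + 1 := by omega
        _ = (insert c {c ∈ F | c ⊆ ⋃ i < m, A i}).ncard :=
          (Set.ncard_insert_of_notMem (fun h => hcnew h.2) (hF.subset (Set.sep_subset _ _))).symm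
        _ ≤ _ := Set.ncard_le_ncard hins hfin

lemma sUnion_subset_biUnion_lt_ncard (hF : F.Finite)
    (hstep : ∀ m, ¬ ⋃₀ F ⊆ ⋃ i < m, A i → ∃ c ∈ F, c ⊆ A m ∧ ¬ c ⊆ ⋃ i < m, A i) :
    ⋃₀ F ⊆ ⋃ i < F.ncard, A i := by
  have hcount := min_le_ncard_sep_subset_biUnion_lt hF hstep F.ncard
  rw [min_self] at hcount
  have hall : {c ∈ F | c ⊆ ⋃ i < F.ncard, A i} = F :=
    Set.eq_of_subset_of_ncard_le (Set.sep_subset _ _) hcount hF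
  exact Set.sUnion_subset (Set.sep_eq_self_iff_mem_true.mp hall)

end Combinatorics

section Grid

variable {n : ℕ} {δ : ℝ}

def openGridCell (n : ℕ) (δ : ℝ) (k : Fin n → ℤ) : Set (Fin n → ℝ) :=
  Set.univ.pi fun i => Set.Ioo (δ * (k i : ℝ)) (δ * ((k i : ℝ) + 1))

/-- The region `Q_in(δ)`. -/
def innerGridRegion (n : ℕ) (δ : ℝ) (Q : Set (Fin n → ℝ)) : Set (Fin n → ℝ) :=
  ⋃₀ gridFamily n δ Q

lemma openGridCell_subset_gridCell (k : Fin n → ℤ) : openGridCell n δ k ⊆ gridCell n δ k :=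
  Set.pi_mono fun _ _ => Set.Ioo_subset_Icc_self

lemma volume_openGridCell (k : Fin n → ℤ) : volume (openGridCell n δ k) = ENNReal.ofReal δ ^ n := by
  simp only [openGridCell, volume_pi_pi, Real.volume_Ioo, mul_add, mul_one, add_sub_cancel_left,
    Finset.prod_const, Finset.card_univ, Fintype.card_fin]

lemma floor_div_eq_of_mem_openGridCell (hδ : 0 < δ) {k : Fin n → ℤ} {x : Fin n → ℝ}
    (hx : x ∈ openGridCell n δ k) (i : Fin n) : ⌊x i / δ⌋ = k i := by
  obtain ⟨hlo, hhi⟩ := hx i (Set.mem_univ i)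
  rw [Int.floor_eq_iff, le_div_iff₀ hδ, div_lt_iff₀ hδ]
  constructor <;> linarith

lemma pairwise_disjoint_openGridCell (hδ : 0 < δ) :
    Pairwise (Function.onFun Disjoint (openGridCell n δ)) := by
  intro k k' hkk'
  refine Set.disjoint_left.mpr fun x hx hx' => hkk' (funext fun i => ?_)
  rw [← floor_div_eq_of_mem_openGridCell hδ hx i, floor_div_eq_of_mem_openGridCell hδ hx' i]

lemma mem_gridCell_floor_div (hδ : 0 < δ) (x : Fin n → ℝ) :
    x ∈ gridCell n δ (fun i => ⌊x i / δ⌋) := by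
  intro i _
  have hlo := (le_div_iff₀' hδ).mp (Int.floor_le (x i / δ))
  have hhi := (div_lt_iff₀' hδ).mp (Int.lt_floor_add_one (x i / δ))
  exact ⟨hlo, hhi.le⟩

lemma dist_le_of_mem_gridCell (hδ : 0 ≤ δ) {k : Fin n → ℤ} {x y : Fin n → ℝ}
    (hx : x ∈ gridCell n δ k) (hy : y ∈ gridCell n δ k) : dist x y ≤ δ := by
  refine (dist_pi_le_iff hδ).mpr fun i => ?_
  obtain ⟨hxlo, hxhi⟩ := hx i (Set.mem_univ i)
  obtain ⟨hylo, hyhi⟩ := hy i (Set.mem_univ i)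
  rw [Real.dist_eq, abs_sub_le_iff]
  constructor <;> linarith

lemma exists_half_Icc_subset {x : ℝ} {k : ℤ} (hx : x ∈ Set.Icc (δ * k) (δ * (k + 1))) :
    ∃ j : ℤ, x ∈ Set.Icc (δ / 2 * j) (δ / 2 * (j + 1)) ∧
      Set.Icc (δ / 2 * j) (δ / 2 * (j + 1)) ⊆ Set.Icc (δ * k) (δ * (k + 1)) := by
  obtain ⟨hlo, hhi⟩ := hx
  have hδ : 0 ≤ δ := by linarith
  by_cases hmid : x ≤ δ * k + δ / 2
  · refine ⟨2 * k, ⟨?_, ?_⟩, Set.Icc_subset_Icc ?_ ?_⟩ <;> push_cast <;> linarith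
  · refine ⟨2 * k + 1, ⟨?_, ?_⟩, Set.Icc_subset_Icc ?_ ?_⟩ <;> push_cast <;> linarith

lemma exists_gridCell_half_subset {k : Fin n → ℤ} {x : Fin n → ℝ} (hx : x ∈ gridCell n δ k) :
    ∃ k', x ∈ gridCell n (δ / 2) k' ∧ gridCell n (δ / 2) k' ⊆ gridCell n δ k := by
  choose j hj using fun i => exists_half_Icc_subset (hx i (Set.mem_univ i))
  exact ⟨j, fun i _ => (hj i).1, Set.pi_mono fun i _ => (hj i).2⟩

variable {Q : Set (Fin n → ℝ)}

lemma gridFamily_eq_image : gridFamily n δ Q = gridCell n δ '' {k | gridCell n δ k ⊆ Q} := by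
  ext c
  constructor
  · rintro ⟨k, rfl, hk⟩
    exact ⟨k, hk, rfl⟩
  · rintro ⟨k, hk, rfl⟩
    exact ⟨k, rfl, hk⟩

lemma gridFamily_finite (hδ : 0 < δ) (hQ : volume Q ≠ ∞) : (gridFamily n δ Q).Finite := by
  rw [gridFamily_eq_image]
  refine Set.Finite.image _ (Set.finite_coe_iff.mp ?_)
  let K := {k | gridCell n δ k ⊆ Q}
  have hcells : ∀ k : K, openGridCell n δ k ⊆ Q := fun k =>
    (openGridCell_subset_gridCell _).trans k.2
  have hfin := Measure.finite_const_le_meas_of_disjoint_iUnion volume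
    (ENNReal.pow_pos (ENNReal.ofReal_pos.mpr hδ) n) (As := fun k : K => openGridCell n δ k)
    (fun _ => MeasurableSet.univ_pi fun _ => measurableSet_Ioo)
    (fun k k' hkk' => pairwise_disjoint_openGridCell hδ (Subtype.coe_ne_coe.mpr hkk'))
    (ne_top_of_le_ne_top hQ (measure_mono (Set.iUnion_subset hcells)))
  simpa only [volume_openGridCell, le_refl, Set.ofPred_true, Set.finite_univ_iff] using hfin

lemma innerGridRegion_subset : innerGridRegion n δ Q ⊆ Q :=
  Set.sUnion_subset fun _ ⟨_, hc, hcQ⟩ => hc ▸ hcQ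

lemma innerGridRegion_subset_half : innerGridRegion n δ Q ⊆ innerGridRegion n (δ / 2) Q := by
  rintro x ⟨_, ⟨k, rfl, hkQ⟩, hx⟩
  obtain ⟨k', hxk', hk'k⟩ := exists_gridCell_half_subset hx
  exact ⟨_, ⟨k', rfl, hk'k.trans hkQ⟩, hxk'⟩

lemma mem_innerGridRegion_of_ball_subset (hδ : 0 < δ) {x : Fin n → ℝ} {ε : ℝ}
    (hball : Metric.ball x ε ⊆ Q) (hδε : δ < ε) : x ∈ innerGridRegion n δ Q := by
  have hx := mem_gridCell_floor_div hδ x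
  refine ⟨_, ⟨_, rfl, fun y hy => hball ?_⟩, hx⟩
  exact Metric.mem_ball.mpr ((dist_le_of_mem_gridCell hδ.le hy hx).trans_lt hδε)

lemma monotone_innerGridRegion_dyadic : Monotone fun m : ℕ => innerGridRegion n (2⁻¹ ^ m) Q := by
  refine monotone_nat_of_le_succ fun m => ?_
  rw [pow_succ, ← div_eq_mul_inv]
  exact innerGridRegion_subset_half

lemma iUnion_innerGridRegion_dyadic (hQ : IsOpen Q) :
    ⋃ m : ℕ, innerGridRegion n (2⁻¹ ^ m) Q = Q := by
  refine (Set.iUnion_subset fun _ => innerGridRegion_subset).antisymm fun x hx => ?_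
  obtain ⟨ε, hε, hball⟩ := Metric.isOpen_iff.mp hQ x hx
  obtain ⟨m, hm⟩ := exists_pow_lt_of_lt_one hε (by norm_num : (2 : ℝ)⁻¹ < 1)
  exact Set.mem_iUnion.mpr ⟨m, mem_innerGridRegion_of_ball_subset (by positivity) hball hm⟩

lemma exists_ofReal_mul_volume_le_volume_innerGridRegion (hQ : IsOpen Q) (hQfin : volume Q ≠ ∞)
    {α : ℝ} (hα : α < 1) :
    ∃ δ > 0, ENNReal.ofReal α * volume Q ≤ volume (innerGridRegion n δ Q) := by
  rcases eq_or_ne (volume Q) 0 with h0 | h0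
  · exact ⟨1, one_pos, by simp [h0]⟩
  have hlt : ENNReal.ofReal α * volume Q < volume Q := by
    calc ENNReal.ofReal α * volume Q < 1 * volume Q :=
          (ENNReal.mul_lt_mul_iff_left h0 hQfin).mpr (ENNReal.ofReal_lt_one.mpr hα)
      _ = volume Q := one_mul _
  have hlim := tendsto_measure_iUnion_atTop (μ := volume) (monotone_innerGridRegion_dyadic (Q := Q))
  rw [iUnion_innerGridRegion_dyadic hQ] at hlim
  obtain ⟨m, hm⟩ := (hlim.eventually (eventually_gt_nhds hlt)).exists
  exact ⟨2⁻¹ ^ m, by positivity, hm.le⟩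

end Grid

theorem covering_probabilistically_complete_general (n : ℕ)
    (Q : Set (Fin n → ℝ)) (hQopen : IsOpen Q) (hQfin : volume Q < ⊤)
    (α : ℝ) (hα1 : α < 1) :
    ∃ δ : ℝ, 0 < δ ∧ ∃ N : ℕ,
      (gridFamily n δ Q).Finite ∧ (gridFamily n δ Q).ncard ≤ N ∧
      ∀ A : ℕ → Set (Fin n → ℝ),
        (∀ m : ℕ, MeasurableSet (A m)) →
        (∀ m : ℕ, A m ⊆ Q) →
        (∀ m : ℕ, ¬ (⋃₀ gridFamily n δ Q) ⊆ (⋃ i < m, A i) →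
          ∃ c ∈ gridFamily n δ Q, c ⊆ A m ∧ ¬ c ⊆ (⋃ i < m, A i)) →
        ENNReal.ofReal α * volume Q ≤ volume (⋃ i < N, A i) := by
  obtain ⟨δ, hδ, hvol⟩ :=
    exists_ofReal_mul_volume_le_volume_innerGridRegion (n := n) hQopen hQfin.ne hα1
  have hfin := gridFamily_finite hδ hQfin.ne
  refine ⟨δ, hδ, _, hfin, le_rfl, fun A _ _ hstep => ?_⟩
  exact hvol.trans (measure_mono (sUnion_subset_biUnion_lt_ncard hfin hstep))

/-- Probabilistic completeness of the covering procedure: for every cover fraction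
`α ∈ [0,1)` there are a resolution `δ > 0` and an iteration bound `N` such that the family of
cells inside `Q` is finite of cardinality at most `N`, and any sequence of measurable subsets
of `Q` whose every iteration wholly covers a previously uncovered cell (as long as the inner
grid region is not yet covered) reaches an `α`-approximate cover of `Q` within `N` steps. -/
theorem covering_probabilistically_complete (n : ℕ) (hn : 1 ≤ n)
    (Q : Set (Fin n → ℝ)) (hQopen : IsOpen Q) (hQfin : volume Q < ⊤)
    (α : ℝ) (hα0 : 0 ≤ α) (hα1 : α < 1) :
    ∃ δ : ℝ, 0 < δ ∧ ∃ N : ℕ,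
      (gridFamily n δ Q).Finite ∧ (gridFamily n δ Q).ncard ≤ N ∧
      ∀ A : ℕ → Set (Fin n → ℝ),
        (∀ m : ℕ, MeasurableSet (A m)) →
        (∀ m : ℕ, A m ⊆ Q) →
        (∀ m : ℕ, ¬ (⋃₀ gridFamily n δ Q) ⊆ (⋃ i < m, A i) →
          ∃ c ∈ gridFamily n δ Q, c ⊆ A m ∧ ¬ c ⊆ (⋃ i < m, A i)) →
        ENNReal.ofReal α * volume Q ≤ volume (⋃ i < N, A i) :=
  covering_probabilistically_complete_general n Q hQopen hQfin α hα1
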